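/- arXiv:2508.15749 — 2 statements merged into one kernel-verified Lean document; each statement's English description precedes it below -/
import Mathlib

section
/- (Knight's identity.) For every τ ∈ ℝ and all u, v ∈ ℝ, the check function ρ_τ(u) = u(τ − 1{u ≤ 0}) satisfies ρ_τ(u − v) − ρ_τ(u) = −v·(τ − 1{u ≤ 0}) + ∫_0^v (1{u ≤ s} − 1{u ≤ 0}) ds, where the integral is the (oriented) integral of the step function s ↦ 1{u ≤ s} − 1{u ≤ 0} from 0 to v. -/
/-- The check (quantile loss) function `ρ_τ(u) = u (τ - 1{u ≤ 0})`. -/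
noncomputable def checkFn (τ : ℝ) (u : ℝ) : ℝ := u * (τ - if u ≤ 0 then 1 else 0)

lemma indicator_intervalIntegrable (u a b : ℝ) :
    IntervalIntegrable (fun s : ℝ => if u ≤ s then (1 : ℝ) else 0) MeasureTheory.volume a b := by
  apply Monotone.intervalIntegrable
  intro x y hxy
  by_cases hx : u ≤ x
  · simp [hx, hx.trans hxy]
  · by_cases hy : u ≤ y <;> simp [hx, hy]

lemma integral_indicator_step (u v : ℝ) :
    (∫ s in (0 : ℝ)..v, (if u ≤ s then (1 : ℝ) else 0)) = max (v - u) 0 - max (0 - u) 0 := by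
  have hcont : ContinuousOn (fun s : ℝ => max (s - u) 0) (Set.uIcc 0 v) :=
    ((continuous_id.sub continuous_const).max continuous_const).continuousOn
  have hderiv : ∀ s ∈ Set.Ioo (min (0:ℝ) v) (max 0 v),
      HasDerivWithinAt (fun s : ℝ => max (s - u) 0)
        (if u ≤ s then (1 : ℝ) else 0) (Set.Ioi s) s := by
    intro s _
    by_cases hs : u ≤ s
    · rw [if_pos hs]
      have h1 : HasDerivWithinAt (fun t : ℝ => t - u) 1 (Set.Ioi s) s :=
        ((hasDerivAt_id s).sub_const u).hasDerivWithinAt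
      have key : ∀ t : ℝ, u ≤ t → max (t - u) 0 = t - u := fun t ht =>
        max_eq_left (by linarith)
      refine h1.congr (fun t ht => ?_) (key s hs)
      exact key t (hs.trans (le_of_lt ht))
    · rw [if_neg hs]
      push_neg at hs
      have h0 : HasDerivAt (fun _ : ℝ => (0 : ℝ)) 0 s := hasDerivAt_const s 0
      have heq : (fun s : ℝ => max (s - u) 0) =ᶠ[nhds s] fun _ => (0 : ℝ) := by
        filter_upwards [Iio_mem_nhds hs] with t ht
        exact max_eq_right (by simp only [Set.mem_Iio] at ht; linarith)
      exact (h0.congr_of_eventuallyEq heq).hasDerivWithinAt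
  have := intervalIntegral.integral_eq_sub_of_hasDeriv_right hcont hderiv
    (indicator_intervalIntegrable u 0 v)
  simpa using this

/-- Knight's identity:
`ρ_τ(u - v) - ρ_τ(u) = -v (τ - 1{u ≤ 0}) + ∫_0^v (1{u ≤ s} - 1{u ≤ 0}) ds`. -/
theorem knight_identity (τ u v : ℝ) :
    checkFn τ (u - v) - checkFn τ u =
      -v * (τ - if u ≤ 0 then 1 else 0) +
        ∫ s in (0 : ℝ)..v, ((if u ≤ s then (1 : ℝ) else 0) - if u ≤ 0 then 1 else 0) := by
  rw [intervalIntegral.integral_sub (indicator_intervalIntegrable u 0 v)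
    (intervalIntegrable_const), integral_indicator_step, intervalIntegral.integral_const]
  simp only [checkFn, smul_eq_mul, sub_zero]
  have huv : u - v ≤ 0 ↔ u ≤ v := by constructor <;> intro <;> linarith
  by_cases h0 : u ≤ 0 <;> by_cases hv : u ≤ v <;>
    simp only [h0, hv, huv, if_true, if_false] <;>
    [rw [max_eq_left (by linarith), max_eq_left (by linarith)];
     rw [max_eq_right (by linarith), max_eq_left (by linarith)];
     rw [max_eq_left (by linarith), max_eq_right (by linarith)];
     rw [max_eq_right (by linarith), max_eq_right (by linarith)]] <;>
    ring
end

section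
/- On a probability space (Ω, P), let Z_1 and Z_2 be independent random variables each with standard normal law N(0,1). Given μ_1, μ_2 ∈ ℝ, σ_1 > 0, σ_2 > 0 and ρ ∈ (−1,1), define Y_1 = μ_1 + σ_1 Z_1 and Y_2 = μ_2 + ρ σ_2 Z_1 + σ_2 √(1−ρ²) Z_2. Then the conditional distribution of Y_2 given Y_1 satisfies, for (law of Y_1)-almost every y_1, condDistrib(Y_2 | Y_1)(y_1) = N(μ_2 + (σ_2/σ_1)ρ(y_1 − μ_1), (1 − ρ²)σ_2²); i.e. Y_2 | Y_1 = y_1 is normal with mean μ_2 + (σ_2/σ_1)ρ(y_1 − μ_1) and variance (1 − ρ²)σ_2². -/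
/-!
Writing `Y₁ = μ₁ + σ₁ Z₁`, the second coordinate is `Y₂ = f (Y₁, Z₂)` with
`f (y, z) = μ₂ + (σ₂ / σ₁) ρ (y - μ₁) + σ₂ √(1 - ρ²) z`, and `Z₂` is independent of `Y₁`.
Whenever `W` is independent of `X`, the joint law of `(X, f (X, W))` is `law X ⊗ₘ κ` with
`κ x = (law W).map (f (x, ·))`, so `κ` is the conditional distribution of `f (X, W)` given `X`.
Here `κ y` is the image of `N(0, 1)` under an affine map, i.e. the announced Gaussian.
-/

open MeasureTheory ProbabilityTheory

section

variable {α β γ : Type*} [MeasurableSpace α] [MeasurableSpace β] [MeasurableSpace γ]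

lemma ProbabilityTheory.Kernel.map_id_prod_const_apply (ν : Measure β) [SFinite ν]
    {f : α × β → γ} (hf : Measurable f) (a : α) :
    (Kernel.id ×ₖ Kernel.const α ν).map f a = ν.map fun b => f (a, b) := by
  rw [map_apply _ hf, prod_apply, id_apply, const_apply, Measure.dirac_prod,
    Measure.map_map hf measurable_prodMk_left]
  rfl

lemma MeasureTheory.Measure.compProd_map_id_prod_const (μ : Measure α) [SFinite μ]
    (ν : Measure β) [SFinite ν] {f : α × β → γ} (hf : Measurable f) :
    μ ⊗ₘ (Kernel.id ×ₖ Kernel.const α ν).map f = (μ.prod ν).map fun p => (p.1, f p) := by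
  ext s hs
  have hg : Measurable fun p : α × β => (p.1, f p) := measurable_fst.prodMk hf
  rw [compProd_apply hs, map_apply hg hs, prod_apply (hg hs)]
  refine lintegral_congr fun a => ?_
  rw [Kernel.map_id_prod_const_apply ν hf, map_apply (by fun_prop) (measurable_prodMk_left hs)]
  rfl

lemma ProbabilityTheory.IndepFun.condDistrib_ae_eq_map_id_prod_const
    [StandardBorelSpace γ] [Nonempty γ] {Ω : Type*} [MeasurableSpace Ω]
    {P : Measure Ω} [IsFiniteMeasure P] {X : Ω → α} {W : Ω → β}
    (hX : AEMeasurable X P) (hW : AEMeasurable W P) (h : IndepFun X W P)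
    {f : α × β → γ} (hf : Measurable f) :
    condDistrib (fun ω => f (X ω, W ω)) X P =ᵐ[P.map X]
      (Kernel.id ×ₖ Kernel.const α (P.map W)).map f := by
  refine condDistrib_ae_eq_of_measure_eq_compProd X (by fun_prop) ?_
  rw [Measure.compProd_map_id_prod_const _ _ hf,
    ← (indepFun_iff_map_prod_eq_prod_map_map hX hW).1 h,
    AEMeasurable.map_map_of_aemeasurable (by fun_prop) (hX.prodMk hW)]
  rfl

end

lemma ProbabilityTheory.gaussianReal_map_const_add_mul {μ : ℝ} {v : NNReal} (m c : ℝ) :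
    (gaussianReal μ v).map (fun x => m + c * x) =
      gaussianReal (c * μ + m) (.mk (c ^ 2) (sq_nonneg c) * v) := by
  change (gaussianReal μ v).map ((m + ·) ∘ (c * ·)) = _
  rw [← Measure.map_map (by fun_prop) (by fun_prop), gaussianReal_map_const_mul,
    gaussianReal_map_const_add]

theorem bivariate_normal_condDistrib_general {Ω : Type*} [MeasurableSpace Ω]
    (P : Measure Ω) [IsProbabilityMeasure P]
    (Z₁ Z₂ : Ω → ℝ) (hZ₁ : Measurable Z₁) (hZ₂ : Measurable Z₂)
    (hindep : IndepFun Z₁ Z₂ P)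
    (hlaw₂ : P.map Z₂ = gaussianReal 0 1)
    (μ₁ μ₂ σ₁ σ₂ ρ : ℝ) (hσ₁ : 0 < σ₁) :
    ∀ᵐ y₁ ∂(P.map fun ω => μ₁ + σ₁ * Z₁ ω),
      condDistrib (fun ω => μ₂ + ρ * σ₂ * Z₁ ω + σ₂ * Real.sqrt (1 - ρ ^ 2) * Z₂ ω)
          (fun ω => μ₁ + σ₁ * Z₁ ω) P y₁ =
        gaussianReal (μ₂ + σ₂ / σ₁ * ρ * (y₁ - μ₁))
          (Real.toNNReal ((1 - ρ ^ 2) * σ₂ ^ 2)) := by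
  set b := σ₂ * Real.sqrt (1 - ρ ^ 2)
  set f : ℝ × ℝ → ℝ := fun p => μ₂ + σ₂ / σ₁ * ρ * (p.1 - μ₁) + b * p.2
  have hf : Measurable f := by fun_prop
  have hY₂ : (fun ω => μ₂ + ρ * σ₂ * Z₁ ω + b * Z₂ ω) = fun ω => f (μ₁ + σ₁ * Z₁ ω, Z₂ ω) := by
    ext ω
    simp only [f]
    field_simp
    ring
  have hY₁Z₂ : IndepFun (fun ω => μ₁ + σ₁ * Z₁ ω) Z₂ P :=
    hindep.comp (φ := fun z => μ₁ + σ₁ * z) (by fun_prop) measurable_id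
  have hvar : NNReal.mk (b ^ 2) (sq_nonneg b) = Real.toNNReal ((1 - ρ ^ 2) * σ₂ ^ 2) := by
    ext
    rw [NNReal.coe_mk, Real.coe_toNNReal', mul_pow, Real.sq_sqrt', mul_comm,
      max_mul_of_nonneg _ _ (sq_nonneg σ₂), zero_mul]
  filter_upwards [hY₁Z₂.condDistrib_ae_eq_map_id_prod_const (by fun_prop) hZ₂.aemeasurable hf]
    with y₁ hy₁
  rw [hY₂, hy₁, Kernel.map_id_prod_const_apply _ hf, hlaw₂]
  simp only [f]
  rw [gaussianReal_map_const_add_mul, mul_zero, zero_add, mul_one, hvar]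

/-- For the bivariate normal pair `Y₁ = μ₁ + σ₁ Z₁`, `Y₂ = μ₂ + ρ σ₂ Z₁ + σ₂ √(1-ρ²) Z₂`
built from independent standard normals, the conditional distribution of `Y₂` given
`Y₁ = y₁` is `N(μ₂ + (σ₂/σ₁) ρ (y₁ - μ₁), (1 - ρ²) σ₂²)` for a.e. `y₁`. -/
theorem bivariate_normal_condDistrib {Ω : Type*} [MeasurableSpace Ω]
    (P : Measure Ω) [IsProbabilityMeasure P]
    (Z₁ Z₂ : Ω → ℝ) (hZ₁ : Measurable Z₁) (hZ₂ : Measurable Z₂)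
    (hindep : IndepFun Z₁ Z₂ P)
    (hlaw₁ : P.map Z₁ = gaussianReal 0 1) (hlaw₂ : P.map Z₂ = gaussianReal 0 1)
    (μ₁ μ₂ σ₁ σ₂ ρ : ℝ) (hσ₁ : 0 < σ₁) (hσ₂ : 0 < σ₂) (hρ : ρ ∈ Set.Ioo (-1 : ℝ) 1) :
    ∀ᵐ y₁ ∂(P.map fun ω => μ₁ + σ₁ * Z₁ ω),
      condDistrib (fun ω => μ₂ + ρ * σ₂ * Z₁ ω + σ₂ * Real.sqrt (1 - ρ ^ 2) * Z₂ ω)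
          (fun ω => μ₁ + σ₁ * Z₁ ω) P y₁ =
        gaussianReal (μ₂ + σ₂ / σ₁ * ρ * (y₁ - μ₁))
          (Real.toNNReal ((1 - ρ ^ 2) * σ₂ ^ 2)) :=
  bivariate_normal_condDistrib_general P Z₁ Z₂ hZ₁ hZ₂ hindep hlaw₂ μ₁ μ₂ σ₁ σ₂ ρ hσ₁
end
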